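/- Minimizer drift under mixtures: let f_old, f_new be μ-strongly convex differentiable functions with minimizers θ_old*, θ_new*, and let f_t = ((L−t)/L) f_old + (t/L) f_new. Then f_t is μ-strongly convex, and its unique minimizer θ_t* satisfies ‖θ_t* − θ_old*‖ ≤ (t/(Lμ))·‖∇f_new(θ_old*)‖. -/

import Mathlib

open RealInnerProductSpace


lemma seq_aux (μ K : ℝ) (hμ : 0 < μ) (hK : 0 ≤ K) (c : ℕ → ℝ) (hc0 : ∀ n, 0 ≤ c n)
    (hstep : ∀ n, c n ≥ 2 * c (n + 1) + μ * (4:ℝ)⁻¹ ^ (n + 1) * K) :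
    μ / 2 * K ≤ c 0 := by
  have hmain : ∀ n, (2:ℝ) ^ n * (c n - μ / 2 * (4:ℝ)⁻¹ ^ n * K)
      ≤ c 0 - μ / 2 * (4:ℝ)⁻¹ ^ 0 * K := by
    intro n
    induction n with
    | zero => simp
    | succ n ih =>
      have hs := hstep n
      have h4 : (4:ℝ)⁻¹ ^ (n+1) = (4:ℝ)⁻¹ ^ n * 4⁻¹ := by ring
      have h2 : c (n+1) - μ / 2 * (4:ℝ)⁻¹ ^ (n+1) * K
          ≤ (c n - μ / 2 * (4:ℝ)⁻¹ ^ n * K) / 2 := by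
        rw [h4] at hs ⊢; linarith
      calc (2:ℝ) ^ (n+1) * (c (n+1) - μ / 2 * (4:ℝ)⁻¹ ^ (n+1) * K)
          ≤ (2:ℝ) ^ (n+1) * ((c n - μ / 2 * (4:ℝ)⁻¹ ^ n * K) / 2) :=
            mul_le_mul_of_nonneg_left h2 (by positivity)
        _ = (2:ℝ) ^ n * (c n - μ / 2 * (4:ℝ)⁻¹ ^ n * K) := by ring
        _ ≤ _ := ih
  have hlb : ∀ n : ℕ, -(μ / 2 * (2:ℝ)⁻¹ ^ n * K) ≤ c 0 - μ / 2 * K := by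
    intro n
    have h1 := hmain n
    have h2 : -(μ / 2 * (4:ℝ)⁻¹ ^ n * K) ≤ c n - μ / 2 * (4:ℝ)⁻¹ ^ n * K := by
      linarith [hc0 n]
    have h3 : (2:ℝ) ^ n * -(μ / 2 * (4:ℝ)⁻¹ ^ n * K)
        ≤ (2:ℝ) ^ n * (c n - μ / 2 * (4:ℝ)⁻¹ ^ n * K) :=
      mul_le_mul_of_nonneg_left h2 (by positivity)
    have h4 : (2:ℝ) ^ n * -(μ / 2 * (4:ℝ)⁻¹ ^ n * K) = -(μ / 2 * (2:ℝ)⁻¹ ^ n * K) := by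
      have h5 : (2:ℝ) ^ n * (4:ℝ)⁻¹ ^ n = (2:ℝ)⁻¹ ^ n := by
        rw [← mul_pow]; norm_num
      calc (2:ℝ) ^ n * -(μ / 2 * (4:ℝ)⁻¹ ^ n * K)
          = -(μ / 2 * ((2:ℝ) ^ n * (4:ℝ)⁻¹ ^ n) * K) := by ring
        _ = -(μ / 2 * (2:ℝ)⁻¹ ^ n * K) := by rw [h5]
    have h6 : μ / 2 * (4:ℝ)⁻¹ ^ 0 * K = μ / 2 * K := by norm_num
    linarith [h4 ▸ h3]
  have htend : Filter.Tendsto (fun n : ℕ => -(μ / 2 * (2:ℝ)⁻¹ ^ n * K))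
      Filter.atTop (nhds 0) := by
    have h := tendsto_pow_atTop_nhds_zero_of_lt_one (by norm_num : (0:ℝ) ≤ 2⁻¹)
      (by norm_num : (2:ℝ)⁻¹ < 1)
    have := ((h.const_mul (μ / 2)).mul_const K).neg
    simpa using this
  have := le_of_tendsto htend (Filter.Eventually.of_forall hlb)
  linarith

/-- Quadratic growth at a minimizer for functions satisfying a strong-convexity
subgradient inequality. -/
lemma quad_growth_aux {E : Type*} [NormedAddCommGroup E] [InnerProductSpace ℝ E]
    (μ : ℝ) (hμ : 0 < μ) (f : E → ℝ) (g : E → E)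
    (hsc : ∀ x y : E, f y ≥ f x + ⟪g x, y - x⟫ + μ / 2 * ‖y - x‖ ^ 2)
    (xs : E) (hmin : ∀ θ, f xs ≤ f θ) (y : E) :
    f xs + μ / 2 * ‖y - xs‖ ^ 2 ≤ f y := by
  have key : μ / 2 * ‖y - xs‖ ^ 2 ≤ (fun n : ℕ => f (xs + (2:ℝ)⁻¹ ^ n • (y - xs)) - f xs) 0 := by
    apply seq_aux μ (‖y - xs‖ ^ 2) hμ (by positivity)
      (fun n : ℕ => f (xs + (2:ℝ)⁻¹ ^ n • (y - xs)) - f xs)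
    · intro n
      simpa using sub_nonneg.mpr (hmin _)
    · intro n
      have h1 := hsc (xs + (2:ℝ)⁻¹ ^ (n+1) • (y - xs)) xs
      have h2 := hsc (xs + (2:ℝ)⁻¹ ^ (n+1) • (y - xs)) (xs + (2:ℝ)⁻¹ ^ n • (y - xs))
      have e1 : xs - (xs + (2:ℝ)⁻¹ ^ (n+1) • (y - xs)) = -((2:ℝ)⁻¹ ^ (n+1) • (y - xs)) := by
        abel
      have e2 : (xs + (2:ℝ)⁻¹ ^ n • (y - xs)) - (xs + (2:ℝ)⁻¹ ^ (n+1) • (y - xs))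
          = (2:ℝ)⁻¹ ^ (n+1) • (y - xs) := by
        have h : (2:ℝ)⁻¹ ^ n - (2:ℝ)⁻¹ ^ (n+1) = (2:ℝ)⁻¹ ^ (n+1) := by ring
        rw [add_sub_add_left_eq_sub, ← sub_smul, h]
      have enorm : ‖(2:ℝ)⁻¹ ^ (n+1) • (y - xs)‖ ^ 2 = (4:ℝ)⁻¹ ^ (n+1) * ‖y - xs‖ ^ 2 := by
        rw [norm_smul, Real.norm_eq_abs, abs_of_nonneg (by positivity : (0:ℝ) ≤ (2:ℝ)⁻¹ ^ (n+1)),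
          mul_pow]
        congr 1
        rw [← pow_mul, mul_comm (n+1) 2, pow_mul]
        norm_num
      rw [e1, inner_neg_right, norm_neg, enorm] at h1
      rw [e2, enorm] at h2
      linarith [add_le_add h1 h2]
  simp only at key
  have : (2:ℝ)⁻¹ ^ (0:ℕ) • (y - xs) = y - xs := by norm_num
  rw [this] at key
  have hxy : xs + (y - xs) = y := by abel
  rw [hxy] at key
  linarith

/-- Minimizer drift under mixtures: `f_t = ((L-t)/L) f_old + (t/L) f_new` is `μ`-strongly
convex (with gradient the corresponding mixture), and any minimizer `θ_t*` of `f_t`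
satisfies `‖θ_t* - θ_old*‖ ≤ (t/(Lμ))·‖∇f_new(θ_old*)‖`. -/
theorem minimizer_drift_mixture {E : Type*} [NormedAddCommGroup E] [InnerProductSpace ℝ E]
    (μ : ℝ) (hμ : 0 < μ) (L : ℕ) (hL : 1 ≤ L)
    (fold fnew : E → ℝ) (gold gnew : E → E)
    (hscold : ∀ x y : E, fold y ≥ fold x + ⟪gold x, y - x⟫ + μ / 2 * ‖y - x‖ ^ 2)
    (hscnew : ∀ x y : E, fnew y ≥ fnew x + ⟪gnew x, y - x⟫ + μ / 2 * ‖y - x‖ ^ 2)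
    (θold θnew : E) (hminold : ∀ θ, fold θold ≤ fold θ) (hminnew : ∀ θ, fnew θnew ≤ fnew θ)
    (t : ℕ) (ht : t ≤ L)
    (ft : E → ℝ) (hft : ∀ θ, ft θ = ((L : ℝ) - t) / L * fold θ + (t : ℝ) / L * fnew θ)
    (gt : E → E) (hgt : ∀ θ, gt θ = (((L : ℝ) - t) / L) • gold θ + ((t : ℝ) / L) • gnew θ) :
    (∀ x y : E, ft y ≥ ft x + ⟪gt x, y - x⟫ + μ / 2 * ‖y - x‖ ^ 2) ∧
      ∀ θt : E, (∀ θ, ft θt ≤ ft θ) →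
        ‖θt - θold‖ ≤ (t : ℝ) / ((L : ℝ) * μ) * ‖gnew θold‖ := by
  have hL0 : (0:ℝ) < (L:ℝ) := by exact_mod_cast Nat.lt_of_lt_of_le Nat.zero_lt_one hL
  have hLne : (L:ℝ) ≠ 0 := ne_of_gt hL0
  set a : ℝ := ((L:ℝ) - t) / L with ha_def
  set b : ℝ := (t:ℝ) / L with hb_def
  have ha : 0 ≤ a := by
    apply div_nonneg _ hL0.le
    have : (t:ℝ) ≤ (L:ℝ) := by exact_mod_cast ht
    linarith
  have hb : 0 ≤ b := div_nonneg (Nat.cast_nonneg t) hL0.le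
  have hab : a + b = 1 := by
    rw [ha_def, hb_def, ← add_div, sub_add_cancel, div_self hLne]
  have hsc : ∀ x y : E, ft y ≥ ft x + ⟪gt x, y - x⟫ + μ / 2 * ‖y - x‖ ^ 2 := by
    intro x y
    rw [hft y, hft x, hgt x, inner_add_left, real_inner_smul_left, real_inner_smul_left]
    have h1 : a * (fold x + ⟪gold x, y - x⟫ + μ / 2 * ‖y - x‖ ^ 2) ≤ a * fold y :=
      mul_le_mul_of_nonneg_left (hscold x y) ha
    have h2 : b * (fnew x + ⟪gnew x, y - x⟫ + μ / 2 * ‖y - x‖ ^ 2) ≤ b * fnew y :=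
      mul_le_mul_of_nonneg_left (hscnew x y) hb
    have hmul : a * (μ / 2 * ‖y - x‖ ^ 2) + b * (μ / 2 * ‖y - x‖ ^ 2)
        = μ / 2 * ‖y - x‖ ^ 2 := by rw [← add_mul, hab, one_mul]
    linarith
  refine ⟨hsc, ?_⟩
  intro θt hmint
  have qgold := quad_growth_aux μ hμ fold gold hscold θold hminold θt
  have qgt := quad_growth_aux μ hμ ft gt hsc θt hmint θold
  have hnew := hscnew θold θt
  rw [norm_sub_rev θold θt] at qgt
  rw [hft θt, hft θold] at qgt
  have h1 : a * (fold θold + μ / 2 * ‖θt - θold‖ ^ 2) ≤ a * fold θt :=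
    mul_le_mul_of_nonneg_left qgold ha
  have h2 : b * (fnew θold + ⟪gnew θold, θt - θold⟫ + μ / 2 * ‖θt - θold‖ ^ 2) ≤ b * fnew θt :=
    mul_le_mul_of_nonneg_left hnew hb
  have hmul : a * (μ / 2 * ‖θt - θold‖ ^ 2) + b * (μ / 2 * ‖θt - θold‖ ^ 2)
      = μ / 2 * ‖θt - θold‖ ^ 2 := by rw [← add_mul, hab, one_mul]
  have key : μ * ‖θt - θold‖ ^ 2 + b * ⟪gnew θold, θt - θold⟫ ≤ 0 := by linarith
  have hip : -⟪gnew θold, θt - θold⟫ ≤ ‖gnew θold‖ * ‖θt - θold‖ := by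
    have := abs_real_inner_le_norm (gnew θold) (θt - θold)
    have := neg_abs_le (⟪gnew θold, θt - θold⟫)
    linarith
  have key2 : μ * ‖θt - θold‖ ^ 2 ≤ b * (‖gnew θold‖ * ‖θt - θold‖) := by
    have := mul_le_mul_of_nonneg_left hip hb
    linarith
  have htarget : (t:ℝ) / ((L:ℝ) * μ) * ‖gnew θold‖ = b * ‖gnew θold‖ / μ := by
    rw [hb_def]; field_simp
  rw [htarget]
  rcases eq_or_lt_of_le (norm_nonneg (θt - θold)) with h0 | hpos
  · rw [← h0]
    positivity
  · rw [le_div_iff₀ hμ]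
    have hsq : μ * ‖θt - θold‖ * ‖θt - θold‖ ≤ b * ‖gnew θold‖ * ‖θt - θold‖ := by
      nlinarith [key2]
    have := le_of_mul_le_mul_right hsq hpos
    linarith
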